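/- arXiv:1001.4482 — 9 statements merged into one kernel-verified Lean document; each statement's English description precedes it below -/
import Mathlib

section
/- Let M be a set and let (v_n) be a sequence of symmetric reflexive relations on M with v_0 = M × M and v_{n+1} ∘ v_{n+1} ∘ v_{n+1} ⊆ v_n for all n. Let δ be the maximal pseudometric on M such that δ(x,y) ≤ 2^{-n} whenever (x,y) ∈ v_n. Then for every n > 0, δ(x,y) < 2^{-n} implies (x,y) ∈ v_{n-1}. -/
open scoped SetRel

/-!
Let `d x y = 2⁻ᵏ` for the first `k` with `(x, y) ∉ v k`, and `d x y = 0` if there is none.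
The cube condition says exactly that `d x₁ x₄ ≤ 2 max (d x₁ x₂, d x₂ x₃, d x₃ x₄)`, so by the
chain-splitting argument of Kelley's metrization lemma
(`PseudoMetricSpace.le_two_mul_dist_ofPreNNDist`) the largest pseudometric `ρ ≤ d` satisfies
`d ≤ 2ρ`. As `d < 2⁻ⁿ` on `v n`, maximality gives `ρ ≤ δ`; hence `δ x y < 2⁻ⁿ` forces
`d x y < 2⁻⁽ⁿ⁻¹⁾`, that is `(x, y) ∈ v (n - 1)`.
-/

namespace Frink

open NNReal

variable {M : Type*} {v : ℕ → Set (M × M)}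

theorem antitone_of_comp_subset (hrefl : ∀ n, SetRel.id ⊆ v n)
    (hcomp : ∀ n, (v (n + 1)) ○ (v (n + 1)) ○ (v (n + 1)) ⊆ v n) : Antitone v :=
  antitone_nat_of_succ_le fun n ⟨_, y⟩ h =>
    hcomp n ⟨y, ⟨y, h, hrefl (n + 1) rfl⟩, hrefl (n + 1) rfl⟩

open Classical in
noncomputable def preDist (v : ℕ → Set (M × M)) (x y : M) : ℝ≥0 :=
  ⨆ n, if (x, y) ∈ v n then 0 else (1 / 2) ^ n

theorem half_pow_le_preDist_iff (hv : Antitone v) {x y : M} {n : ℕ} :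
    (1 / 2 : ℝ≥0) ^ n ≤ preDist v x y ↔ (x, y) ∉ v n := by
  classical
  have hbdd : BddAbove (Set.range fun m => if (x, y) ∈ v m then (0 : ℝ≥0) else (1 / 2) ^ m) := by
    refine ⟨1, Set.forall_mem_range.2 fun m => ?_⟩
    split_ifs
    · exact zero_le_one
    · exact pow_le_one₀ (by norm_num) (by norm_num)
  refine ⟨fun hle hn => hle.not_gt ?_, fun hn => le_ciSup_of_le hbdd n (by rw [if_neg hn])⟩
  refine (ciSup_le fun m => ?_).trans_lt
    (pow_lt_pow_right_of_lt_one₀ (by norm_num) (by norm_num) n.lt_succ_self)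
  split_ifs with hm
  · exact zero_le
  · exact pow_le_pow_of_le_one (by norm_num) (by norm_num)
      (lt_of_not_ge fun hmn => hm (hv hmn hn))

theorem preDist_lt_iff (hv : Antitone v) {x y : M} {n : ℕ} :
    preDist v x y < (1 / 2 : ℝ≥0) ^ n ↔ (x, y) ∈ v n := by
  rw [← not_le, half_pow_le_preDist_iff hv, not_not]

theorem preDist_self (hrefl : ∀ n, SetRel.id ⊆ v n) (x : M) : preDist v x x = 0 := by
  simp [preDist, fun n => hrefl n (SetRel.mem_id.2 (rfl : x = x))]

theorem preDist_comm (hsymm : ∀ n, ∀ p ∈ v n, Prod.swap p ∈ v n) (x y : M) :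
    preDist v x y = preDist v y x := by
  have hswap (n : ℕ) : (x, y) ∈ v n ↔ (y, x) ∈ v n := ⟨hsymm n _, hsymm n (y, x)⟩
  exact iSup_congr fun n => by rw [hswap n]

theorem preDist_le_two_mul_max (hv : Antitone v)
    (hcomp : ∀ n, (v (n + 1)) ○ (v (n + 1)) ○ (v (n + 1)) ⊆ v n) (x₁ x₂ x₃ x₄ : M) :
    preDist v x₁ x₄ ≤
      2 * max (preDist v x₁ x₂) (max (preDist v x₂ x₃) (preDist v x₃ x₄)) := by
  refine ciSup_le fun m => ?_
  split_ifs with hm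
  · exact zero_le
  rw [← div_le_iff₀' zero_lt_two, ← mul_one_div (_ ^ _), ← pow_succ]
  simp only [le_max_iff, half_pow_le_preDist_iff hv, ← not_and_or]
  rintro ⟨h₁₂, h₂₃, h₃₄⟩
  exact hm (hcomp m ⟨x₃, ⟨x₂, h₁₂, h₂₃⟩, h₃₄⟩)

end Frink

open Frink in
theorem frink_lemma_general {M : Type*} (v : ℕ → Set (M × M))
    (hrefl : ∀ n, SetRel.id ⊆ v n)
    (hsymm : ∀ n, ∀ p ∈ v n, Prod.swap p ∈ v n)
    (hcomp : ∀ n, (v (n + 1)) ○ (v (n + 1)) ○ (v (n + 1)) ⊆ v n)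
    (δ : M → M → ℝ)
    (hδmax : ∀ ρ : M → M → ℝ, (∀ x, ρ x x = 0) → (∀ x y, ρ x y = ρ y x) →
      (∀ x y z, ρ x z ≤ ρ x y + ρ y z) → (∀ x y, 0 ≤ ρ x y) →
      (∀ n, ∀ p ∈ v n, ρ p.1 p.2 ≤ (1 / 2 : ℝ) ^ n) → ∀ x y, ρ x y ≤ δ x y) :
    ∀ n, 0 < n → ∀ x y : M, δ x y < (1 / 2 : ℝ) ^ n → (x, y) ∈ v (n - 1) := by
  intro n hn x y hxy
  have hv := antitone_of_comp_subset hrefl hcomp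
  let _ := PseudoMetricSpace.ofPreNNDist (preDist v) (preDist_self hrefl) (preDist_comm hsymm)
  have hdist_le (m : ℕ) (p : M × M) (hp : p ∈ v m) : dist p.1 p.2 ≤ (1 / 2 : ℝ) ^ m := by
    refine (PseudoMetricSpace.dist_ofPreNNDist_le _ _ _ p.1 p.2).trans ?_
    exact_mod_cast ((preDist_lt_iff hv).mpr hp).le
  have hdist_δ := hδmax dist dist_self dist_comm dist_triangle (fun _ _ => dist_nonneg) hdist_le
  have hpre_dist := PseudoMetricSpace.le_two_mul_dist_ofPreNNDist (preDist v) (preDist_self hrefl)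
    (preDist_comm hsymm) (preDist_le_two_mul_max hv hcomp) x y
  obtain ⟨k, rfl⟩ := Nat.exists_eq_add_one_of_ne_zero hn.ne'
  rw [← preDist_lt_iff hv, ← NNReal.coe_lt_coe]
  calc (preDist v x y : ℝ) ≤ 2 * dist x y := hpre_dist
    _ ≤ 2 * δ x y := by gcongr; exact hdist_δ x y
    _ < 2 * (1 / 2) ^ (k + 1) := by gcongr
    _ = _ := by push_cast; ring_nf

/-- **Frink's Lemma.** Given a Frink sequence `v` of symmetric reflexive relations on `M`
(`v 0 = univ`, `v (n+1) ∘ v (n+1) ∘ v (n+1) ⊆ v n`), and `δ` the maximal pseudometric with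
`δ ≤ 2⁻ⁿ` on `v n`, then `δ x y < 2⁻ⁿ` implies `(x, y) ∈ v (n-1)` for `n > 0`. -/
theorem frink_lemma {M : Type*} (v : ℕ → Set (M × M))
    (hv0 : v 0 = Set.univ)
    (hrefl : ∀ n, SetRel.id ⊆ v n)
    (hsymm : ∀ n, ∀ p ∈ v n, Prod.swap p ∈ v n)
    (hcomp : ∀ n, (v (n + 1)) ○ (v (n + 1)) ○ (v (n + 1)) ⊆ v n)
    (δ : M → M → ℝ)
    (hδ0 : ∀ x, δ x x = 0)
    (hδsymm : ∀ x y, δ x y = δ y x)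
    (hδtri : ∀ x y z, δ x z ≤ δ x y + δ y z)
    (hδnonneg : ∀ x y, 0 ≤ δ x y)
    (hδle : ∀ n, ∀ p ∈ v n, δ p.1 p.2 ≤ (1 / 2 : ℝ) ^ n)
    (hδmax : ∀ ρ : M → M → ℝ, (∀ x, ρ x x = 0) → (∀ x y, ρ x y = ρ y x) →
      (∀ x y z, ρ x z ≤ ρ x y + ρ y z) → (∀ x y, 0 ≤ ρ x y) →
      (∀ n, ∀ p ∈ v n, ρ p.1 p.2 ≤ (1 / 2 : ℝ) ^ n) → ∀ x y, ρ x y ≤ δ x y) :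
    ∀ n, 0 < n → ∀ x y : M, δ x y < (1 / 2 : ℝ) ^ n → (x, y) ∈ v (n - 1) :=
  frink_lemma_general v hrefl hsymm hcomp δ hδmax
end

section
/- Let Γ be a connected graph with vertex set M, and suppose U is an exact perspectivity on Γ, i.e., a uniformity on M such that every entourage contains all but finitely many edges of Γ, and the intersection of all entourages equals the diagonal. Then Γ is fine: for every pair of vertices x, y and every n, the set of arcs (embedded paths) of length at most n from x to y is finite. -/
open Uniformity
open scoped SetRel

/-!
Suppose infinitely many arcs of length `m` join `x` to `y`, and take a free ultrafilter on them.
Along it, each vertex position of the arcs is either eventually constant or escapes every finite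
set; positions `0` and `m` are constant, and since arcs are determined by their vertices, some
position in between is not. So there is a run of escaping positions `i < j < l` between constant
positions `i` and `l`, with values `a` and `b`. Every edge of the run has an escaping endpoint,
hence eventually lies outside any given finite set of edges, i.e. inside any given entourage.
Composing entourages along the run puts `(a, b)` in every entourage, so `a = b` by exactness,
contradicting the injectivity of arcs.
-/

open Filter

theorem Ultrafilter.tendsto_cofinite_or_eventually_eq {ι M : Type*} (𝒰 : Ultrafilter ι)
    (f : ι → M) : Tendsto f 𝒰 cofinite ∨ ∃ c, ∀ᶠ σ in 𝒰, f σ = c := by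
  refine (𝒰.map f).le_cofinite_or_eq_pure.imp (fun h ↦ by rwa [Ultrafilter.coe_map] at h)
    fun ⟨c, hc⟩ ↦ ⟨c, ?_⟩
  simpa using congrArg (fun 𝒱 : Ultrafilter M ↦ ∀ᶠ b in (𝒱 : Filter M), b = c) hc

theorem Filter.Tendsto.prodMk_cofinite_of_left {ι α β : Type*} {F : Filter ι} {f : ι → α}
    (hf : Tendsto f F cofinite) (g : ι → β) :
    Tendsto (fun σ ↦ (f σ, g σ)) F cofinite :=
  (tendsto_comap_iff (g := Prod.fst) (f := fun σ ↦ (f σ, g σ)) |>.2 hf).mono_right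
    (comap_cofinite_le _)

theorem Filter.Tendsto.prodMk_cofinite_of_right {ι α β : Type*} {F : Filter ι} {g : ι → β}
    (hg : Tendsto g F cofinite) (f : ι → α) :
    Tendsto (fun σ ↦ (f σ, g σ)) F cofinite :=
  (tendsto_comap_iff (g := Prod.snd) (f := fun σ ↦ (f σ, g σ)) |>.2 hg).mono_right
    (comap_cofinite_le _)

theorem Nat.exists_gap_of_not {P : ℕ → Prop} {m k : ℕ} (h0 : P 0) (hm : P m) (hkm : k ≤ m)
    (hk : ¬P k) : ∃ i l, i + 1 < l ∧ l ≤ m ∧ P i ∧ P l ∧ ∀ j, i < j → j < l → ¬P j := by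
  classical
  have hl : ∃ l, k ≤ l ∧ P l := ⟨m, hkm, hm⟩
  set i := Nat.findGreatest P k
  set l := Nat.find hl
  have hik : i < k := (Nat.findGreatest_le k).lt_of_ne fun h ↦
    hk (h ▸ Nat.findGreatest_spec (zero_le k) h0)
  have hkl : k < l := (Nat.find_spec hl).1.lt_of_ne fun h ↦ hk (h ▸ (Nat.find_spec hl).2)
  refine ⟨i, l, by omega, Nat.find_min' hl ⟨hkm, hm⟩, Nat.findGreatest_spec (zero_le k) h0,
    (Nat.find_spec hl).2, fun j hij hjl hj ↦ ?_⟩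
  rcases le_or_gt j k with hjk | hkj
  · exact Nat.findGreatest_is_greatest hij hjk hj
  · exact Nat.find_min hl hjl ⟨hkj.le, hj⟩

section Perspectivity

variable {M ι : Type*} {U : Filter (M × M)} {F : Filter ι}

theorem tendsto_of_tendsto_cofinite_of_adj {Γ : SimpleGraph M}
    (hpersp : ∀ s ∈ U, {p : M × M | Γ.Adj p.1 p.2 ∧ p ∉ s}.Finite) {e : ι → M × M}
    (he : Tendsto e F cofinite) (hadj : ∀ᶠ σ in F, Γ.Adj (e σ).1 (e σ).2) : Tendsto e F U :=
  fun s hs ↦ ((he.eventually_mem (hpersp s hs).compl_mem_cofinite).and hadj).mono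
    fun _ ⟨hfar, hσ⟩ ↦ by_contra fun hs ↦ hfar ⟨hσ, hs⟩

theorem tendsto_prodMk_trans (hcomp : ∀ s ∈ U, ∃ t ∈ U, t ○ t ⊆ s) {f g h : ι → M}
    (hfg : Tendsto (fun σ ↦ (f σ, g σ)) F U) (hgh : Tendsto (fun σ ↦ (g σ, h σ)) F U) :
    Tendsto (fun σ ↦ (f σ, h σ)) F U := fun s hs ↦ by
  obtain ⟨t, ht, hts⟩ := hcomp s hs
  exact ((hfg.eventually_mem ht).and (hgh.eventually_mem ht)).mono fun σ ⟨h₁, h₂⟩ ↦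
    hts ⟨g σ, h₁, h₂⟩

theorem tendsto_prodMk_of_chain (hcomp : ∀ s ∈ U, ∃ t ∈ U, t ○ t ⊆ s) {v : ℕ → ι → M}
    {i l : ℕ} (hil : i < l)
    (hstep : ∀ j, i ≤ j → j < l → Tendsto (fun σ ↦ (v j σ, v (j + 1) σ)) F U) :
    Tendsto (fun σ ↦ (v i σ, v l σ)) F U := by
  induction l, hil using Nat.le_induction with
  | base => exact hstep i le_rfl (Nat.lt_succ_self i)
  | succ l hil ih =>
    exact tendsto_prodMk_trans hcomp (ih fun j hij hjl ↦ hstep j hij (by omega))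
      (hstep l (by omega) (Nat.lt_succ_self l))

theorem tendsto_prodMk_of_adj_chain {Γ : SimpleGraph M}
    (hcomp : ∀ s ∈ U, ∃ t ∈ U, t ○ t ⊆ s)
    (hpersp : ∀ s ∈ U, {p : M × M | Γ.Adj p.1 p.2 ∧ p ∉ s}.Finite) {v : ℕ → ι → M}
    {i l : ℕ} (hil : i + 1 < l)
    (hadj : ∀ j, i ≤ j → j < l → ∀ᶠ σ in F, Γ.Adj (v j σ) (v (j + 1) σ))
    (hfree : ∀ j, i < j → j < l → Tendsto (v j) F cofinite) :
    Tendsto (fun σ ↦ (v i σ, v l σ)) F U := by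
  refine tendsto_prodMk_of_chain hcomp (by omega) fun j hij hjl ↦
    tendsto_of_tendsto_cofinite_of_adj hpersp ?_ (hadj j hij hjl)
  obtain rfl | hij := hij.eq_or_lt
  · exact (hfree (i + 1) (by omega) hil).prodMk_cofinite_of_right _
  · exact (hfree j hij hjl).prodMk_cofinite_of_left _

end Perspectivity

theorem SimpleGraph.Walk.exists_getVert_not_eventually_eq {M : Type*} {Γ : SimpleGraph M}
    {x y : M} {m : ℕ} {𝒰 : Ultrafilter (Γ.Walk x y)} (hfree : (𝒰 : Filter (Γ.Walk x y)) ≤ cofinite)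
    (hlen : ∀ᶠ w : Γ.Walk x y in 𝒰, w.length = m) :
    ∃ k ≤ m, ¬∃ c, ∀ᶠ w : Γ.Walk x y in 𝒰, w.getVert k = c := by
  by_contra! hall
  choose c hc using fun k : Fin (m + 1) ↦ hall k (Nat.lt_succ_iff.1 k.2)
  have hc' := hlen.and (eventually_all.2 hc)
  obtain ⟨w₀, hw₀, hcw₀⟩ := hc'.exists
  have hconst : ∀ᶠ w in 𝒰, w = w₀ := hc'.mono fun w ⟨hw, hcw⟩ ↦
    ext_getVert_le_length (hw.trans hw₀.symm) fun k hk ↦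
      (hcw ⟨k, by omega⟩).trans (hcw₀ ⟨k, by omega⟩).symm
  obtain ⟨w, hw, hw'⟩ := (hconst.and (hfree (Set.finite_singleton w₀).compl_mem_cofinite)).exists
  exact hw' hw

theorem SimpleGraph.finite_setOf_isPath_length_eq {M : Type*} {Γ : SimpleGraph M}
    {U : Filter (M × M)} (hcomp : ∀ s ∈ U, ∃ t ∈ U, t ○ t ⊆ s)
    (hpersp : ∀ s ∈ U, {p : M × M | Γ.Adj p.1 p.2 ∧ p ∉ s}.Finite)
    (hexact : ⋂₀ U.sets = SetRel.id) (x y : M) (m : ℕ) :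
    {w : Γ.Walk x y | w.IsPath ∧ w.length = m}.Finite := by
  set W := {w : Γ.Walk x y | w.IsPath ∧ w.length = m}
  by_contra hinf
  have := Set.Infinite.cofinite_inf_principal_neBot hinf
  set 𝒰 := Ultrafilter.of (cofinite ⊓ 𝓟 W)
  have hfree : (𝒰 : Filter (Γ.Walk x y)) ≤ cofinite := (Ultrafilter.of_le _).trans inf_le_left
  have hW : ∀ᶠ w in 𝒰, w ∈ W := (Ultrafilter.of_le _).trans inf_le_right (mem_principal_self W)
  set P : ℕ → Prop := fun k ↦ ∃ c, ∀ᶠ w : Γ.Walk x y in 𝒰, w.getVert k = c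
  have hP0 : P 0 := ⟨x, .of_forall fun w ↦ w.getVert_zero⟩
  have hPm : P m := ⟨y, hW.mono fun w hw ↦ hw.2 ▸ w.getVert_length⟩
  obtain ⟨k, hkm, hk⟩ := Walk.exists_getVert_not_eventually_eq hfree (hW.mono fun _ ↦ And.right)
  obtain ⟨i, l, hil, hlm, ⟨a, ha⟩, ⟨b, hb⟩, hgap⟩ := Nat.exists_gap_of_not hP0 hPm hkm hk
  have hclose : Tendsto (fun w : Γ.Walk x y ↦ (w.getVert i, w.getVert l)) 𝒰 U :=
    tendsto_prodMk_of_adj_chain hcomp hpersp hil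
      (fun j _ hjl ↦ hW.mono fun w ⟨_, hlen⟩ ↦ w.adj_getVert_succ (by omega))
      fun j hij hjl ↦ (𝒰.tendsto_cofinite_or_eventually_eq _).resolve_right (hgap j hij hjl)
  have hab : (a, b) ∈ ⋂₀ U.sets := Set.mem_sInter.2 fun s hs ↦ by
    obtain ⟨w, hw, hi, hl⟩ := ((hclose.eventually_mem hs).and (ha.and hb)).exists
    rwa [hi, hl] at hw
  rw [hexact, SetRel.mem_id] at hab
  obtain ⟨w, ⟨hpath, hlen⟩, hi, hl⟩ := (hW.and (ha.and hb)).exists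
  have := hpath.getVert_injOn (show i ≤ w.length by omega) (show l ≤ w.length by omega)
    (hi.trans (hab.trans hl.symm))
  omega

theorem exact_perspectivity_implies_fine_general {M : Type*} (Γ : SimpleGraph M)
    (U : Filter (M × M))
    (hcomp : ∀ s ∈ U, ∃ t ∈ U, t ○ t ⊆ s)
    (hpersp : ∀ s ∈ U, {p : M × M | Γ.Adj p.1 p.2 ∧ p ∉ s}.Finite)
    (hexact : ⋂₀ U.sets = SetRel.id) :
    ∀ (x y : M) (n : ℕ), {w : Γ.Walk x y | w.IsPath ∧ w.length ≤ n}.Finite := by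
  intro x y n
  refine ((Set.finite_Iic n).biUnion fun m _ ↦
    Γ.finite_setOf_isPath_length_eq hcomp hpersp hexact x y m).subset ?_
  exact fun w hw ↦ Set.mem_biUnion hw.2 ⟨hw.1, rfl⟩

/-- If a connected graph `Γ` possesses an exact perspectivity (a uniformity on the vertex set,
every entourage of which contains all but finitely many edges, with `⋂ U = Δ`), then `Γ` is
fine: for all vertices `x, y` and all `n`, there are only finitely many arcs (embedded paths)
of length at most `n` from `x` to `y`. -/
theorem exact_perspectivity_implies_fine {M : Type*} (Γ : SimpleGraph M)
    (hconn : Γ.Connected)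
    (U : Filter (M × M))
    (hrefl : ∀ s ∈ U, SetRel.id ⊆ s)
    (hsymm : ∀ s ∈ U, Prod.swap ⁻¹' s ∈ U)
    (hcomp : ∀ s ∈ U, ∃ t ∈ U, t ○ t ⊆ s)
    (hpersp : ∀ s ∈ U, {p : M × M | Γ.Adj p.1 p.2 ∧ p ∉ s}.Finite)
    (hexact : ⋂₀ U.sets = SetRel.id) :
    ∀ (x y : M) (n : ℕ), {w : Γ.Walk x y | w.IsPath ∧ w.length ≤ n}.Finite :=
  exact_perspectivity_implies_fine_general Γ U hcomp hpersp hexact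
end

section
/- Let Γ be a connected graph. For each edge e define u_e = {(x,y) : d(x,e) + d(y,e) ≥ d(x,y)} where d is the graph metric (the set of pairs such that no geodesic between them passes through e). Suppose U is a uniformity on the vertex set Γ⁰ contained in the filter generated by {u_e : e ∈ Γ¹} (a 'visibility'). Then U is precompact: for every entourage v ∈ U, the vertex set Γ⁰ is a union of finitely many v-small sets. -/
open Uniformity

/-- For an edge `{a, b}` of `Γ`, the set of pairs of vertices such that no geodesic joining
them passes through the edge: `u_e = {(x,y) : d(x,e) + d(y,e) ≥ d(x,y)}`. -/
def visSet {M : Type*} (Γ : SimpleGraph M) (a b : M) : Set (M × M) :=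
  {p | Γ.dist p.1 p.2 ≤ min (Γ.dist p.1 a) (Γ.dist p.1 b) + min (Γ.dist p.2 a) (Γ.dist p.2 b)}

/-- The visibility filter of a graph, generated by the sets `u_e` over all edges `e`. -/
def visFilter {M : Type*} (Γ : SimpleGraph M) : Filter (M × M) :=
  Filter.generate {s | ∃ a b : M, Γ.Adj a b ∧ s = visSet Γ a b}

/-!
Given an entourage `v`, pick `t ∈ U` with `t ∘ t ⊆ v`; as `t` lies in the visibility filter it
contains `u_E` for a finite edge set `E`. Every vertex `x` sees the endpoint `f` of `E` nearest to
it past every edge of `E`, since `d(x, f) ≤ d(x, e)`; so `(x, f)` lies in `u_E ⊆ t`, and so does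
`(f, x)` because `u_E` is symmetric.
Hence the finitely many sets `{x | (x, f) ∈ t ∧ (f, x) ∈ t}`, for `f` an endpoint of `E`,
cover the vertices, and each of them is `t ∘ t`-small.
-/

section Visibility

variable {M : Type*} (Γ : SimpleGraph M)

theorem swap_mem_visSet_iff {a b : M} {p : M × M} : p.swap ∈ visSet Γ a b ↔ p ∈ visSet Γ a b := by
  simp only [visSet, Set.mem_ofPred_eq, Prod.fst_swap, Prod.snd_swap]
  rw [Γ.dist_comm, add_comm]

theorem mem_visSet_of_dist_le {a b x f : M} (ha : Γ.dist x f ≤ Γ.dist x a)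
    (hb : Γ.dist x f ≤ Γ.dist x b) : (x, f) ∈ visSet Γ a b :=
  (le_min ha hb).trans (Nat.le_add_right _ _)

theorem exists_finset_forall_mem_of_mem_visFilter {s : Set (M × M)} (hs : s ∈ visFilter Γ) :
    ∃ F : Finset M, ∀ x, ∃ f ∈ F, (x, f) ∈ s ∧ (f, x) ∈ s := by
  classical
  rcases isEmpty_or_nonempty M with hM | hM
  · exact ⟨∅, fun x => isEmptyElim x⟩
  have x₀ : M := hM.some
  obtain ⟨S, hSgen, hSfin, hSs⟩ := Filter.mem_generate_iff.mp hs
  have hSvis : ∀ e ∈ S, ∃ a b : M, e = visSet Γ a b := fun e he =>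
    let ⟨a, b, _, hab⟩ := hSgen he
    ⟨a, b, hab⟩
  choose! a b hab using hSvis
  -- `x₀` only makes `F` nonempty when `S` is empty.
  let F : Finset M := insert x₀ (hSfin.toFinset.image a ∪ hSfin.toFinset.image b)
  have hendpoints : ∀ e ∈ S, a e ∈ F ∧ b e ∈ F := fun e he =>
    ⟨Finset.mem_insert_of_mem (Finset.mem_union_left _ (Finset.mem_image_of_mem a (by simpa))),
      Finset.mem_insert_of_mem (Finset.mem_union_right _ (Finset.mem_image_of_mem b (by simpa)))⟩
  refine ⟨F, fun x => ?_⟩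
  obtain ⟨f, hfF, hf⟩ := F.exists_min_image (Γ.dist x) ⟨x₀, Finset.mem_insert_self _ _⟩
  have hxf : (x, f) ∈ ⋂₀ S := by
    intro e he
    rw [hab e he]
    exact mem_visSet_of_dist_le Γ (hf _ (hendpoints e he).1) (hf _ (hendpoints e he).2)
  refine ⟨f, hfF, hSs hxf, hSs fun e he => ?_⟩
  have hxfe := hxf e he
  rw [hab e he] at hxfe ⊢
  exact (swap_mem_visSet_iff Γ).mpr hxfe

end Visibility

theorem exists_finite_cover_small_of_finset_net {M : Type*} {t : Set (M × M)} (F : Finset M)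
    (hF : ∀ x, ∃ f ∈ F, (x, f) ∈ t ∧ (f, x) ∈ t) :
    ∃ c : Finset (Set M),
      (∀ m ∈ c, ∀ x ∈ m, ∀ y ∈ m, (x, y) ∈ SetRel.comp t t) ∧ ⋃₀ (c : Set (Set M)) = Set.univ := by
  classical
  refine ⟨F.image fun f => {x | (x, f) ∈ t ∧ (f, x) ∈ t}, ?_, ?_⟩
  · simp only [Finset.mem_image]
    rintro - ⟨f, -, rfl⟩ x hx y hy
    exact ⟨f, hx.1, hy.2⟩
  · refine Set.eq_univ_of_forall fun x => ?_
    obtain ⟨f, hfF, hxf⟩ := hF x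
    exact Set.mem_sUnion.mpr ⟨_, by simpa using ⟨f, hfF, rfl⟩, hxf⟩

theorem visibility_precompact_general {M : Type*} (Γ : SimpleGraph M)
    (U : Filter (M × M))
    (hcomp : ∀ s ∈ U, ∃ t ∈ U, SetRel.comp t t ⊆ s)
    (hvis : ∀ s ∈ U, s ∈ visFilter Γ) :
    ∀ v ∈ U, ∃ c : Finset (Set M),
      (∀ m ∈ c, ∀ x ∈ m, ∀ y ∈ m, x = y ∨ (x, y) ∈ v) ∧ ⋃₀ (c : Set (Set M)) = Set.univ := by
  intro v hv
  obtain ⟨t, ht, htv⟩ := hcomp v hv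
  obtain ⟨F, hF⟩ := exists_finset_forall_mem_of_mem_visFilter Γ (hvis t ht)
  obtain ⟨c, hsmall, hcover⟩ := exists_finite_cover_small_of_finset_net F hF
  exact ⟨c, fun m hm x hx y hy => Or.inr (htv (hsmall m hm x hx y hy)), hcover⟩

/-- Every visibility uniformity on a connected graph is precompact: for every entourage `v`,
the vertex set is a union of finitely many `v`-small sets. -/
theorem visibility_precompact {M : Type*} (Γ : SimpleGraph M) (hconn : Γ.Connected)
    (U : Filter (M × M))
    (hrefl : ∀ s ∈ U, (SetRel.id : Set (M × M)) ⊆ s)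
    (hsymm : ∀ s ∈ U, Prod.swap ⁻¹' s ∈ U)
    (hcomp : ∀ s ∈ U, ∃ t ∈ U, SetRel.comp t t ⊆ s)
    (hvis : ∀ s ∈ U, s ∈ visFilter Γ) :
    ∀ v ∈ U, ∃ c : Finset (Set M),
      (∀ m ∈ c, ∀ x ∈ m, ∀ y ∈ m, x = y ∨ (x, y) ∈ v) ∧ ⋃₀ (c : Set (Set M)) = Set.univ :=
  visibility_precompact_general Γ U hcomp hvis
end

section
/- Let Γ be a connected graph with graph metric d, and let E be a finite set of edges with vertex set S = ⋃E. For each x ∈ S, the set A_x = {v ∈ Γ⁰ : d(v,x) = d(v,S)} has the property that any two of its elements are joined by a geodesic avoiding all edges of E; consequently if u is an entourage containing u_E = ⋂_{e∈E} u_e, then each A_x is u²-small, and Γ⁰ = ⋃_{x∈S} A_x is a union of |S| many u²-small sets. -/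
open Uniformity

/-- The set of endpoints of a finite set of (ordered) edges. -/
def edgeVerts {M : Type*} (E : Finset (M × M)) : Set M :=
  {x | ∃ e ∈ E, x = e.1 ∨ x = e.2}

/-- Graph distance from a vertex to a set of vertices. -/
noncomputable def distSet {M : Type*} (Γ : SimpleGraph M) (v : M) (S : Set M) : ℕ :=
  sInf ((fun s => Γ.dist v s) '' S)

/-- The set `A_x` of vertices whose distance to the vertex set `S = ⋃E` is realized at `x`. -/
def Ax {M : Type*} (Γ : SimpleGraph M) (E : Finset (M × M)) (x : M) : Set M :=
  {v | Γ.dist v x = distSet Γ v (edgeVerts E)}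

/-!
A geodesic from `v` to `w` through an edge `{a, b}` has length at least
`d(v, a) + 1 + d(b, w)` (or the same with `a, b` swapped). If `v, w ∈ A_x` then `x` is at least
as close to each of them as `a` and `b` are, so the detour through `x` gives
`d(v, w) ≤ d(v, x) + d(x, w) ≤ min (d(v,a)) (d(v,b)) + min (d(w,a)) (d(w,b))`, which is too short
for such a geodesic: every pair from `A_x` lies in `u_E`. Since `x ∈ A_x`, the pairs `(v, x)` and
`(x, w)` lie in `u_E ⊆ u`, so `(v, w) ∈ u²`.
-/

namespace SimpleGraph.Walk

variable {V : Type*} {G : SimpleGraph V} {u v a b : V}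

lemma dist_add_dist_lt_length_of_mem_edges (p : G.Walk u v) (h : s(a, b) ∈ p.edges) :
    G.dist u a + G.dist b v < p.length ∨ G.dist u b + G.dist a v < p.length := by
  have hab := p.adj_of_mem_edges h
  rcases (isSubwalk_toWalk_iff_mem_edges hab).mpr h with ⟨q, r, rfl⟩ | ⟨q, r, rfl⟩
  · left
    have := dist_le q
    have := dist_le r
    simp only [length_append, Adj.length_toWalk]
    omega
  · right
    have := dist_le q
    have := dist_le r
    simp only [length_append, Adj.length_toWalk]
    omega

lemma notMem_edges_of_mem_visSet (p : G.Walk u v) (hp : p.length = G.dist u v)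
    (huv : (u, v) ∈ visSet G a b) : s(a, b) ∉ p.edges := fun h => by
  simp only [visSet, Set.mem_ofPred_eq] at huv
  have := dist_comm (G := G) (u := a) (v := v)
  have := dist_comm (G := G) (u := b) (v := v)
  rcases p.dist_add_dist_lt_length_of_mem_edges h with h | h <;> omega

end SimpleGraph.Walk

section NearestEdgeVertex

variable {M : Type*} {Γ : SimpleGraph M} {E : Finset (M × M)} {S : Set M} {e : M × M} {v w x : M}

lemma distSet_le {y : M} (hy : y ∈ S) : distSet Γ v S ≤ Γ.dist v y :=
  Nat.sInf_le ⟨y, hy, rfl⟩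

lemma exists_dist_eq_distSet (hS : S.Nonempty) : ∃ y ∈ S, Γ.dist v y = distSet Γ v S :=
  Nat.sInf_mem (hS.image _)

lemma fst_mem_edgeVerts (he : e ∈ E) : e.1 ∈ edgeVerts E := ⟨e, he, .inl rfl⟩

lemma snd_mem_edgeVerts (he : e ∈ E) : e.2 ∈ edgeVerts E := ⟨e, he, .inr rfl⟩

lemma edgeVerts_nonempty (hE : E.Nonempty) : (edgeVerts E).Nonempty :=
  let ⟨_, he⟩ := hE
  ⟨_, fst_mem_edgeVerts he⟩

lemma mem_Ax_self (hx : x ∈ edgeVerts E) : x ∈ Ax Γ E x := by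
  have := distSet_le (Γ := Γ) (v := x) hx
  simp only [Ax, Set.mem_ofPred_eq, SimpleGraph.dist_self] at this ⊢
  omega

lemma dist_le_of_mem_Ax (hv : v ∈ Ax Γ E x) (he : e ∈ E) :
    Γ.dist v x ≤ min (Γ.dist v e.1) (Γ.dist v e.2) :=
  le_min (hv ▸ distSet_le (fst_mem_edgeVerts he)) (hv ▸ distSet_le (snd_mem_edgeVerts he))

lemma mem_visSet_of_mem_Ax (hΓ : Γ.Connected) (hv : v ∈ Ax Γ E x) (hw : w ∈ Ax Γ E x)
    (he : e ∈ E) : (v, w) ∈ visSet Γ e.1 e.2 :=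
  calc Γ.dist v w ≤ Γ.dist v x + Γ.dist x w := hΓ.dist_triangle
    _ = Γ.dist v x + Γ.dist w x := by rw [SimpleGraph.dist_comm (u := x)]
    _ ≤ _ := add_le_add (dist_le_of_mem_Ax hv he) (dist_le_of_mem_Ax hw he)

lemma iUnion_Ax_eq_univ (hE : E.Nonempty) : ⋃ x ∈ edgeVerts E, Ax Γ E x = Set.univ :=
  Set.eq_univ_of_forall fun v =>
    let ⟨y, hy, hvy⟩ := exists_dist_eq_distSet (Γ := Γ) (v := v) (edgeVerts_nonempty hE)
    Set.mem_iUnion₂.mpr ⟨y, hy, hvy⟩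

end NearestEdgeVertex

theorem geodesic_retraction_cover_general {M : Type*} (Γ : SimpleGraph M) (hconn : Γ.Connected)
    (E : Finset (M × M)) (hEne : E.Nonempty) :
    (∀ x ∈ edgeVerts E, ∀ v ∈ Ax Γ E x, ∀ w ∈ Ax Γ E x,
      ∃ p : Γ.Walk v w, p.length = Γ.dist v w ∧ ∀ e ∈ E, s(e.1, e.2) ∉ p.edges) ∧
    (∀ u : Set (M × M), (⋂ e ∈ E, visSet Γ e.1 e.2) ⊆ u →
      ∀ x ∈ edgeVerts E, ∀ v ∈ Ax Γ E x, ∀ w ∈ Ax Γ E x, v = w ∨ (v, w) ∈ SetRel.comp u u) ∧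
    (⋃ x ∈ edgeVerts E, Ax Γ E x) = Set.univ := by
  have hvis {x v w : M} (hv : v ∈ Ax Γ E x) (hw : w ∈ Ax Γ E x) :
      (v, w) ∈ ⋂ e ∈ E, visSet Γ e.1 e.2 :=
    Set.mem_iInter₂.mpr fun _ he => mem_visSet_of_mem_Ax hconn hv hw he
  refine ⟨fun x _ v hv w hw => ?_, fun u hu x hx v hv w hw => ?_, iUnion_Ax_eq_univ hEne⟩
  · obtain ⟨p, hp⟩ := hconn.exists_walk_length_eq_dist v w
    exact ⟨p, hp, fun e he =>
      p.notMem_edges_of_mem_visSet hp (Set.mem_iInter₂.mp (hvis hv hw) e he)⟩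
  · exact .inr ⟨x, hu (hvis hv (mem_Ax_self hx)), hu (hvis (mem_Ax_self hx) hw)⟩

/-- Let `E` be a finite nonempty set of edges of a connected graph `Γ` with vertex set
`S = ⋃E`. For each `x ∈ S`, any two elements of `A_x = {v : d(v,x) = d(v,S)}` are joined by a
geodesic avoiding all edges of `E`; consequently, for any `u ⊇ u_E`, each `A_x` is `u²`-small,
and the vertex set is the union of the `A_x`, `x ∈ S`. -/
theorem geodesic_retraction_cover {M : Type*} (Γ : SimpleGraph M) (hconn : Γ.Connected)
    (E : Finset (M × M)) (hE : ∀ e ∈ E, Γ.Adj e.1 e.2) (hEne : E.Nonempty) :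
    (∀ x ∈ edgeVerts E, ∀ v ∈ Ax Γ E x, ∀ w ∈ Ax Γ E x,
      ∃ p : Γ.Walk v w, p.length = Γ.dist v w ∧ ∀ e ∈ E, s(e.1, e.2) ∉ p.edges) ∧
    (∀ u : Set (M × M), (⋂ e ∈ E, visSet Γ e.1 e.2) ⊆ u →
      ∀ x ∈ edgeVerts E, ∀ v ∈ Ax Γ E x, ∀ w ∈ Ax Γ E x, v = w ∨ (v, w) ∈ SetRel.comp u u) ∧
    (⋃ x ∈ edgeVerts E, Ax Γ E x) = Set.univ :=
  geodesic_retraction_cover_general Γ hconn E hEne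
end

section
/- Let X and Y be compact Hausdorff spaces and let Φ be a set of homeomorphisms X → Y, identified with their graphs as closed subsets of X × Y. Then Φ is equicontinuous at a point p ∈ X if and only if every element s of the closure of Φ in the Vietoris topology on the space of closed subsets of X × Y intersects the fiber {p} × Y in exactly one point. -/
/-- The hyperspace of closed subsets of a topological space. -/
def ClosedSubsets (Z : Type*) [TopologicalSpace Z] := {s : Set Z // IsClosed s}

/-- The Vietoris topology on the hyperspace of closed subsets. -/
instance ClosedSubsets.instTopologicalSpace (Z : Type*) [TopologicalSpace Z] :
    TopologicalSpace (ClosedSubsets Z) :=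
  TopologicalSpace.generateFrom
    ({A | ∃ o : Set Z, IsOpen o ∧ A = {c : ClosedSubsets Z | c.val ⊆ o}} ∪
     {A | ∃ o : Set Z, IsOpen o ∧ A = {c : ClosedSubsets Z | (c.val ∩ o).Nonempty}})

/-- The graph of a homeomorphism, as a closed subset of `X × Y`. -/
def homeoGraph {X Y : Type*} [TopologicalSpace X] [TopologicalSpace Y] [T2Space Y]
    (φ : X ≃ₜ Y) : ClosedSubsets (X × Y) :=
  ⟨{p : X × Y | p.2 = φ p.1}, isClosed_eq continuous_snd (φ.continuous.comp continuous_fst)⟩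

/-!
If `(p, y)` and `(p, y')` with `y ≠ y'` both lie on a limit `s` of graphs, some graph of a `φ ∈ Φ`
meets small boxes `U × B` and `U × B'` around them, where `closure B` and `closure B'` are
disjoint: points of `U` are sent far apart, against equicontinuity. Conversely, if equicontinuity
fails for a neighbourhood `V` of the diagonal, choose along an ultrafilter `φ ∈ Φ` and `x, x' → p`
with `(φ x, φ x') ∉ V`. The hyperspace is compact (it sits in Mathlib's Vietoris space on sets,
and the closure of a Vietoris limit is again a limit), so the graphs converge to some `s`. As
membership is a closed relation over the regular space `X × Y`, the limits `(p, y)`, `(p, y')` of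
`(x, φ x)`, `(x', φ x')` lie on `s`, and `y ≠ y'` because `(y, y') ∉ interior V`. Some point of
`s` lies over `p` since meeting the closed fibre `{p} × Y` is a closed condition.
-/

open Set Filter Topology TopologicalSpace

namespace ClosedSubsets

variable {Z : Type*} [TopologicalSpace Z]

section
attribute [local instance] TopologicalSpace.vietoris

theorem isInducing_val : @IsInducing (ClosedSubsets Z) _ _ _ Subtype.val := by
  refine ⟨(induced_generateFrom_eq.trans ?_).symm⟩
  congr 1
  ext A
  simp only [image_union, image_image, mem_union, mem_image, mem_ofPred_eq, @eq_comm _ A]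
  rfl

instance [CompactSpace Z] : CompactSpace (ClosedSubsets Z) := by
  refine ⟨isCompact_iff_ultrafilter_le_nhds.2 fun 𝒰 _ => ?_⟩
  set t := (@Ultrafilter.map (ClosedSubsets Z) _ Subtype.val 𝒰).lim
  refine ⟨⟨closure t, isClosed_closure⟩, mem_univ _,
    (isInducing_val.tendsto_nhds_iff (f := id)).2 ?_⟩
  exact Ultrafilter.le_nhds_lim _ |>.trans vietoris.specializes_closure.nhds_le_nhds

theorem isOpen_setOf_subset {o : Set Z} (ho : IsOpen o) :
    IsOpen {c : ClosedSubsets Z | c.val ⊆ o} :=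
  ho.powerset_vietoris.preimage isInducing_val.continuous

theorem isOpen_setOf_inter_nonempty {o : Set Z} (ho : IsOpen o) :
    IsOpen {c : ClosedSubsets Z | (c.val ∩ o).Nonempty} :=
  (vietoris.isOpen_inter_nonempty_of_isOpen ho).preimage isInducing_val.continuous

theorem isClosed_setOf_inter_nonempty {K : Set Z} (hK : IsClosed K) :
    IsClosed {c : ClosedSubsets Z | (c.val ∩ K).Nonempty} :=
  (vietoris.isClosed_inter_nonempty_of_isClosed hK).preimage isInducing_val.continuous

end

theorem isClosed_setOf_mem [RegularSpace Z] :
    IsClosed {q : ClosedSubsets Z × Z | q.2 ∈ q.1.val} := by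
  refine isOpen_compl_iff.1 (isOpen_iff_mem_nhds.2 fun ⟨c, z⟩ hz => ?_)
  obtain ⟨K, ⟨hKz, hK⟩, hKc⟩ := (closed_nhds_basis z).mem_iff.1 (c.2.isOpen_compl.mem_nhds hz)
  filter_upwards [prod_mem_nhds ((isOpen_setOf_subset hK.isOpen_compl).mem_nhds
    (subset_compl_comm.1 hKc)) hKz] with q hq hmem using hq.1 hmem hq.2

theorem inter_nonempty_of_mem_closure {K : Set Z} (hK : IsClosed K) {T : Set (ClosedSubsets Z)}
    (hT : ∀ c ∈ T, (c.val ∩ K).Nonempty) {s : ClosedSubsets Z} (hs : s ∈ closure T) :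
    (s.val ∩ K).Nonempty :=
  closure_minimal hT (isClosed_setOf_inter_nonempty hK) hs

theorem exists_mem_inter_nonempty_of_mem_closure {T : Set (ClosedSubsets Z)} {s : ClosedSubsets Z}
    (hs : s ∈ closure T) {o o' : Set Z} (ho : IsOpen o) (ho' : IsOpen o')
    (hso : (s.val ∩ o).Nonempty) (hso' : (s.val ∩ o').Nonempty) :
    ∃ c ∈ T, (c.val ∩ o).Nonempty ∧ (c.val ∩ o').Nonempty := by
  obtain ⟨c, hco, hcT⟩ := mem_closure_iff.1 hs _
    ((isOpen_setOf_inter_nonempty ho).inter (isOpen_setOf_inter_nonempty ho')) ⟨hso, hso'⟩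
  exact ⟨c, hcT, hco⟩

end ClosedSubsets

theorem tendsto_apply_pair_principal_prod_nhds_iff {X Y F : Type*} [TopologicalSpace X]
    [FunLike F X Y] {Φ : Set F} {p : X} {l : Filter (Y × Y)} :
    Tendsto (fun q : F × X × X => (q.1 q.2.1, q.1 q.2.2)) (𝓟 Φ ×ˢ 𝓝 (p, p)) l ↔
      ∀ V ∈ l, ∃ U ∈ 𝓝 p, ∀ φ ∈ Φ, ∀ x ∈ U, ∀ x' ∈ U, (φ x, φ x') ∈ V := by
  rw [nhds_prod_eq, ((hasBasis_principal Φ).prod (𝓝 p).basis_sets.prod_self).tendsto_left_iff]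
  refine forall₂_congr fun V _ => ⟨fun ⟨⟨_, U⟩, ⟨_, hU⟩, h⟩ => ?_, fun ⟨U, hU, h⟩ => ?_⟩
  · exact ⟨U, hU, fun φ hφ x hx x' hx' => @h (φ, x, x') ⟨hφ, hx, hx'⟩⟩
  · exact ⟨((), U), ⟨trivial, hU⟩, fun q ⟨hφ, hx, hx'⟩ => h _ hφ _ hx _ hx'⟩

section HomeoGraph

variable {X Y : Type*} [TopologicalSpace X] [TopologicalSpace Y]

theorem exists_mem_of_mem_closure_image_homeoGraph [T1Space X] [T2Space Y] {Φ : Set (X ≃ₜ Y)}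
    {s : ClosedSubsets (X × Y)} (hs : s ∈ closure (homeoGraph '' Φ)) (p : X) :
    ∃ y, (p, y) ∈ s.val := by
  obtain ⟨⟨x, y⟩, hxy, rfl, -⟩ := ClosedSubsets.inter_nonempty_of_mem_closure
    (isClosed_singleton.prod isClosed_univ)
    (T := homeoGraph '' Φ) (forall_mem_image.2 fun φ _ => ⟨(p, φ p), rfl, rfl, trivial⟩) hs
  exact ⟨y, hxy⟩

theorem eq_of_mem_closure_image_homeoGraph [T25Space Y] {Φ : Set (X ≃ₜ Y)} {p : X}
    (hΦ : ∀ V ∈ 𝓝ˢ (diagonal Y), ∃ U ∈ 𝓝 p, ∀ φ ∈ Φ, ∀ x ∈ U, ∀ x' ∈ U, (φ x, φ x') ∈ V)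
    {s : ClosedSubsets (X × Y)} (hs : s ∈ closure (homeoGraph '' Φ)) {y y' : Y}
    (hy : (p, y) ∈ s.val) (hy' : (p, y') ∈ s.val) : y = y' := by
  by_contra hne
  obtain ⟨B, hyB, hB, B', hyB', hB', hBB'⟩ := exists_open_nhds_disjoint_closure hne
  have hV : (closure B ×ˢ closure B')ᶜ ∈ 𝓝ˢ (diagonal Y) :=
    (isClosed_closure.prod isClosed_closure).isOpen_compl.mem_nhdsSet.2
      fun ⟨a, b⟩ hab h => hBB'.ne_of_mem h.1 h.2 hab
  obtain ⟨U, hU, hUV⟩ := hΦ _ hV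
  have hpU : p ∈ interior U := mem_interior_iff_mem_nhds.2 hU
  obtain ⟨_, ⟨φ, hφ, rfl⟩, ⟨⟨x, _⟩, hx, hxU, hxB⟩, ⟨⟨x', _⟩, hx', hx'U, hx'B'⟩⟩ :=
    ClosedSubsets.exists_mem_inter_nonempty_of_mem_closure hs (isOpen_interior.prod hB)
      (isOpen_interior.prod hB') ⟨_, hy, hpU, hyB⟩ ⟨_, hy', hpU, hyB'⟩
  exact hUV φ hφ x (interior_subset hxU) x' (interior_subset hx'U)
    ⟨subset_closure (hx ▸ hxB), subset_closure (hx' ▸ hx'B')⟩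

theorem exists_mem_closure_image_homeoGraph_ne_of_not_tendsto [CompactSpace X] [T2Space X]
    [CompactSpace Y] [T2Space Y] {Φ : Set (X ≃ₜ Y)} {p : X}
    (h : ¬Tendsto (fun q : (X ≃ₜ Y) × X × X => (q.1 q.2.1, q.1 q.2.2)) (𝓟 Φ ×ˢ 𝓝 (p, p))
      (𝓝ˢ (diagonal Y))) :
    ∃ s ∈ closure (homeoGraph '' Φ), ∃ y y', y ≠ y' ∧ (p, y) ∈ s.val ∧ (p, y') ∈ s.val := by
  obtain ⟨V, hV, hfreq⟩ := not_tendsto_iff_exists_frequently_notMem.1 h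
  have := frequently_iff_neBot.1 hfreq
  obtain ⟨𝒰, h𝒰⟩ := Ultrafilter.exists_le
    (𝓟 Φ ×ˢ 𝓝 (p, p) ⊓ 𝓟 {q : (X ≃ₜ Y) × X × X | (q.1 q.2.1, q.1 q.2.2) ∉ V})
  have h𝒰Φ : (𝒰 : Filter ((X ≃ₜ Y) × X × X)) ≤ 𝓟 Φ ×ˢ 𝓝 (p, p) := h𝒰.trans inf_le_left
  have hΦ : ∀ᶠ q : (X ≃ₜ Y) × X × X in 𝒰, q.1 ∈ Φ :=
    tendsto_principal.1 (tendsto_fst.mono_left h𝒰Φ)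
  have hx : Tendsto (fun q : (X ≃ₜ Y) × X × X => q.2) 𝒰 (𝓝 (p, p)) := tendsto_snd.mono_left h𝒰Φ
  have hV' : ∀ᶠ q : (X ≃ₜ Y) × X × X in 𝒰, (q.1 q.2.1, q.1 q.2.2) ∉ V :=
    le_principal_iff.1 (h𝒰.trans inf_le_right)
  set F := fun q : (X ≃ₜ Y) × X × X => (homeoGraph q.1, q.1 q.2.1, q.1 q.2.2)
  obtain ⟨⟨s, y, y'⟩, hF⟩ : ∃ z, Tendsto F 𝒰 (𝓝 z) := ⟨_, (𝒰.map F).le_nhds_lim⟩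
  have hs := hF.fst_nhds
  have hy := hF.snd_nhds.fst_nhds
  have hy' := hF.snd_nhds.snd_nhds
  have hyy' : (y, y') ∉ interior V := isOpen_interior.isClosed_compl.mem_of_tendsto
    (hy.prodMk_nhds hy') (hV'.mono fun q hq h => hq (interior_subset h))
  refine ⟨s, mem_closure_of_tendsto hs (hΦ.mono fun q hq => mem_image_of_mem _ hq), y, y',
    fun h => hyy' (subset_interior_iff_mem_nhdsSet.2 hV (h ▸ rfl)), ?_, ?_⟩
  · exact ClosedSubsets.isClosed_setOf_mem.mem_of_tendsto
      (hs.prodMk_nhds (hx.fst_nhds.prodMk_nhds hy)) (Eventually.of_forall fun q => rfl)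
  · exact ClosedSubsets.isClosed_setOf_mem.mem_of_tendsto
      (hs.prodMk_nhds (hx.snd_nhds.prodMk_nhds hy')) (Eventually.of_forall fun q => rfl)

end HomeoGraph

/-- A set `Φ` of homeomorphisms between compacta `X` and `Y` is equicontinuous at `p ∈ X`
iff every element of the Vietoris closure of the set of graphs of members of `Φ` is
single-valued at `p`. -/
theorem equicontinuous_iff_closure_single_valued
    {X Y : Type*} [TopologicalSpace X] [CompactSpace X] [T2Space X]
    [TopologicalSpace Y] [CompactSpace Y] [T2Space Y]
    (Φ : Set (X ≃ₜ Y)) (p : X) :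
    (∀ V ∈ nhdsSet (Set.diagonal Y), ∃ U ∈ nhds p,
        ∀ φ ∈ Φ, ∀ x ∈ U, ∀ x' ∈ U, ((φ x, φ x') : Y × Y) ∈ V) ↔
    (∀ s ∈ closure ((fun φ => homeoGraph φ) '' Φ), ∃! y : Y, ((p, y) : X × Y) ∈ s.val) := by
  refine ⟨fun hΦ s hs => ?_, fun hsingle => ?_⟩
  · obtain ⟨y, hy⟩ := exists_mem_of_mem_closure_image_homeoGraph hs p
    exact ⟨y, hy, fun y' hy' => (eq_of_mem_closure_image_homeoGraph hΦ hs hy hy').symm⟩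
  · rw [← tendsto_apply_pair_principal_prod_nhds_iff]
    by_contra h
    obtain ⟨s, hs, y, y', hne, hy, hy'⟩ := exists_mem_closure_image_homeoGraph_ne_of_not_tendsto h
    exact hne ((hsingle s hs).unique hy hy')
end

section
/- Let T be a set and let D ⊆ T × T be a nonempty symmetric set (invariant under (p,q) ↦ (q,p)) closed under the partial operation (a,b)·(c,d) = (a,d) defined whenever b ≠ c. Then one of the following holds: (a) D = {(p,q),(q,p)} for some p,q; (b) there exists p ∈ T with (p,p) ∈ D and D ⊆ ({p} × T) ∪ (T × {p}); or (c) D = L × L for some L ⊆ T. -/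
/-- Classification of nonempty symmetric subsets of `T × T` closed under the partial operation
`(a,b)·(c,d) = (a,d)` (defined when `b ≠ c`): such a set is a symmetric pair `{(p,q),(q,p)}`,
is squeezed between `{(p,p)}` and the cross at `p`, or is a square `L × L`. -/
theorem symmetric_remainder_classification {T : Type*} (D : Set (T × T)) (hne : D.Nonempty)
    (hsymm : ∀ p ∈ D, (p.2, p.1) ∈ D)
    (hclosed : ∀ a b c d : T, (a, b) ∈ D → (c, d) ∈ D → b ≠ c → (a, d) ∈ D) :
    (∃ p q : T, D = {(p, q), (q, p)}) ∨
    (∃ p : T, (p, p) ∈ D ∧ D ⊆ ({p} ×ˢ (Set.univ : Set T)) ∪ ((Set.univ : Set T) ×ˢ {p})) ∨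
    (∃ L : Set T, D = L ×ˢ L) := by
  by_cases hsq : ∀ x y : T, (∃ b, (x, b) ∈ D) → (∃ c, (c, y) ∈ D) → (x, y) ∈ D
  · right; right
    refine ⟨{x | ∃ b, (x, b) ∈ D}, ?_⟩
    ext ⟨x, y⟩
    constructor
    · intro h
      exact ⟨⟨y, h⟩, ⟨x, hsymm _ h⟩⟩
    · rintro ⟨⟨b, hb⟩, ⟨b', hb'⟩⟩
      exact hsq x y ⟨b, hb⟩ ⟨b', hsymm _ hb'⟩
  · push_neg at hsq
    obtain ⟨u, v, ⟨b, hub⟩, ⟨c, hcv⟩, huv⟩ := hsq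
    have hbc : b = c := by
      by_contra h
      exact huv (hclosed u b c v hub hcv h)
    subst hbc
    -- every out-neighbor of u is b
    have hu : ∀ w, (u, w) ∈ D → w = b := by
      intro w hw
      by_contra h
      exact huv (hclosed u w b v hw hcv h)
    -- everything in D lies on the cross of b
    have hcross : ∀ x y, (x, y) ∈ D → x = b ∨ y = b := by
      intro x y hxy
      by_cases hx : x = b
      · exact Or.inl hx
      · exact Or.inr (hu y (hclosed u b x y hub hxy (fun h => hx h.symm)))
    by_cases hbb : (b, b) ∈ D
    · right; left
      refine ⟨b, hbb, ?_⟩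
      rintro ⟨x, y⟩ hxy
      rcases hcross x y hxy with h | h
      · exact Or.inl ⟨h, trivial⟩
      · exact Or.inr ⟨trivial, h⟩
    · left
      have key : ∀ y z, (b, y) ∈ D → (z, b) ∈ D → y = z := by
        intro y z hy hz
        by_contra h
        exact hbb (hclosed b y z b hy hz h)
      have hbu : (b, u) ∈ D := hsymm _ hub
      refine ⟨u, b, ?_⟩
      ext ⟨x, y⟩
      simp only [Set.mem_insert_iff, Set.mem_singleton_iff, Prod.mk.injEq]
      constructor
      · intro hxy
        rcases hcross x y hxy with h | h
        · subst h
          exact Or.inr ⟨rfl, key y u hxy hub⟩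
        · subst h
          exact Or.inl ⟨(key u x hbu hxy).symm, rfl⟩
      · rintro (⟨rfl, rfl⟩ | ⟨rfl, rfl⟩)
        · exact hub
        · exact hbu
end

section
/- Let T be a set and let D ⊆ T × T be nonempty and closed under the partial operation (a,b)·(c,d) = (a,d) (defined when b ≠ c), not assumed symmetric. If D is not contained in ({p} × T) ∪ (T × {q}) for any pair (p,q), then D = A × B for some subsets A, B ⊆ T. -/
/-- Non-symmetric classification: a nonempty subset of `T × T` closed under the partial
operation `(a,b)·(c,d) = (a,d)` (defined when `b ≠ c`), which is not contained in any cross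
`({p} × T) ∪ (T × {q})`, is a product `A × B`. -/
theorem nonsymmetric_remainder_classification {T : Type*} (D : Set (T × T)) (hne : D.Nonempty)
    (hclosed : ∀ a b c d : T, (a, b) ∈ D → (c, d) ∈ D → b ≠ c → (a, d) ∈ D)
    (hnc : ¬ ∃ p q : T, D ⊆ ({p} ×ˢ (Set.univ : Set T)) ∪ ((Set.univ : Set T) ×ˢ {q})) :
    ∃ A B : Set T, D = A ×ˢ B := by
  -- full closure
  have hfull : ∀ a b c d : T, (a, b) ∈ D → (c, d) ∈ D → (a, d) ∈ D := by
    intro a b c d hab hcd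
    by_cases hbc : b ≠ c
    · exact hclosed a b c d hab hcd hbc
    push_neg at hbc
    subst hbc
    -- find (x,y) ∈ D with x ≠ b and y ≠ b
    have : ∃ p ∈ D, p.1 ≠ b ∧ p.2 ≠ b := by
      by_contra h
      push_neg at h
      apply hnc
      refine ⟨b, b, ?_⟩
      rintro ⟨x, y⟩ hxy
      rcases eq_or_ne x b with rfl | hx
      · exact Or.inl ⟨rfl, trivial⟩
      · exact Or.inr ⟨trivial, (h (x, y) hxy hx)⟩
    obtain ⟨⟨x, y⟩, hxy, hx, hy⟩ := this
    exact hclosed a y b d (hclosed a b x y hab hxy (Ne.symm hx)) hcd hy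
  refine ⟨Prod.fst '' D, Prod.snd '' D, ?_⟩
  ext ⟨a, d⟩
  constructor
  · intro h
    exact ⟨⟨_, h, rfl⟩, ⟨_, h, rfl⟩⟩
  · rintro ⟨⟨⟨a', b⟩, hab, rfl⟩, ⟨⟨c, d'⟩, hcd, rfl⟩⟩
    exact hfull _ b c _ hab hcd
end

section
/- Let X and Y be compact Hausdorff spaces with |X| ≥ 3 and suppose a cross c = ({r} × Y) ∪ (X × {a}) (for r ∈ X, a ∈ Y) contains a quasi-homeomorphism q (an element of the Vietoris closure of the set of graphs of homeomorphisms X → Y). Then c = q. -/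
/-- The cross with repeller `r` and attractor `a`: `({r} × Y) ∪ (X × {a})`. -/
def cross {X Y : Type*} (r : X) (a : Y) : Set (X × Y) :=
  ({r} ×ˢ (Set.univ : Set Y)) ∪ ((Set.univ : Set X) ×ˢ {a})

/-- Subbasic Vietoris open sets of "containment" type are open. -/
lemma vietoris_sub_open {Z : Type*} [TopologicalSpace Z] {o : Set Z} (ho : IsOpen o) :
    IsOpen {c : ClosedSubsets Z | c.val ⊆ o} :=
  TopologicalSpace.isOpen_generateFrom_of_mem (Or.inl ⟨o, ho, rfl⟩)

/-- From a quasi-homeomorphism contained in an open set, extract a homeomorphism whose graph is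
contained in that open set. -/
lemma exists_graph_subset {X Y : Type*} [TopologicalSpace X] [TopologicalSpace Y] [T2Space Y]
    (q : ClosedSubsets (X × Y))
    (hq : q ∈ closure (Set.range (fun φ : X ≃ₜ Y => homeoGraph φ)))
    {o : Set (X × Y)} (ho : IsOpen o) (hqo : q.val ⊆ o) :
    ∃ φ : X ≃ₜ Y, ∀ x, (x, φ x) ∈ o := by
  have h := mem_closure_iff.mp hq {c | c.val ⊆ o} (vietoris_sub_open ho) hqo
  obtain ⟨c, hc, φ, rfl⟩ := h
  exact ⟨φ, fun x => hc (show (x, φ x) ∈ (homeoGraph φ).val from rfl)⟩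

/-- If `|X| ≥ 3` and a cross contains a quasi-homeomorphism (a Vietoris limit of graphs of
homeomorphisms `X → Y`), then the quasi-homeomorphism equals the cross. -/
theorem cross_contains_quasi_homeomorphism
    {X Y : Type*} [TopologicalSpace X] [CompactSpace X] [T2Space X]
    [TopologicalSpace Y] [CompactSpace Y] [T2Space Y]
    (hX : ∃ x₁ x₂ x₃ : X, x₁ ≠ x₂ ∧ x₁ ≠ x₃ ∧ x₂ ≠ x₃)
    (r : X) (a : Y) (q : ClosedSubsets (X × Y))
    (hq : q ∈ closure (Set.range (fun φ : X ≃ₜ Y => homeoGraph φ)))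
    (hsub : q.val ⊆ cross r a) :
    q.val = cross r a := by
  obtain ⟨x₁, x₂, x₃, h12, h13, h23⟩ := hX
  -- surjectivity of the first projection
  have hsX : ∀ x : X, ∃ y, (x, y) ∈ q.val := by
    intro x
    by_contra h
    push_neg at h
    have hqo : q.val ⊆ ({x}ᶜ : Set X) ×ˢ (Set.univ : Set Y) := by
      rintro ⟨p1, p2⟩ hp
      refine ⟨fun hx => ?_, trivial⟩
      have hh : p1 = x := hx
      exact h p2 (hh ▸ hp)
    obtain ⟨φ, hφ⟩ := exists_graph_subset q hq (isOpen_compl_singleton.prod isOpen_univ) hqo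
    exact (hφ x).1 rfl
  -- surjectivity of the second projection
  have hsY : ∀ y : Y, ∃ x, (x, y) ∈ q.val := by
    intro y
    by_contra h
    push_neg at h
    have hqo : q.val ⊆ (Set.univ : Set X) ×ˢ ({y}ᶜ : Set Y) := by
      rintro ⟨p1, p2⟩ hp
      refine ⟨trivial, fun hy => ?_⟩
      have hh : p2 = y := hy
      exact h p1 (hh ▸ hp)
    obtain ⟨φ, hφ⟩ := exists_graph_subset q hq (isOpen_univ.prod isOpen_compl_singleton) hqo
    have := (hφ (φ.symm y)).2
    rw [φ.apply_symm_apply] at this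
    exact this rfl
  -- horizontal part of the cross
  have hhor : ∀ x : X, x ≠ r → (x, a) ∈ q.val := by
    intro x hx
    obtain ⟨y, hy⟩ := hsX x
    rcases hsub hy with h | h
    · exact absurd (show x = r from h.1) hx
    · have hh : y = a := h.2
      exact hh ▸ hy
  -- vertical part of the cross
  have hver : ∀ y : Y, y ≠ a → (r, y) ∈ q.val := by
    intro y hy
    obtain ⟨x, hx⟩ := hsY y
    rcases hsub hx with h | h
    · have hh : x = r := h.1
      exact hh ▸ hx
    · exact absurd (show y = a from h.2) hy
  -- the center of the cross
  have hra : (r, a) ∈ q.val := by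
    by_contra hra
    by_cases hA : a ∈ closure {y : Y | y ≠ a}
    · apply hra
      have hS : (({r} : Set X) ×ˢ {y : Y | y ≠ a}) ⊆ q.val := by
        rintro ⟨p1, p2⟩ ⟨hp1, hp2⟩
        have hh : p1 = r := hp1
        exact hh ▸ hver p2 hp2
      have hcl : (r, a) ∈ closure (({r} : Set X) ×ˢ {y : Y | y ≠ a}) := by
        rw [closure_prod_eq]
        exact ⟨subset_closure rfl, hA⟩
      exact q.2.closure_subset (closure_mono hS hcl)
    · by_cases hR : r ∈ closure {x : X | x ≠ r}
      · apply hra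
        have hS : ({x : X | x ≠ r} ×ˢ ({a} : Set Y)) ⊆ q.val := by
          rintro ⟨p1, p2⟩ ⟨hp1, hp2⟩
          have hh : p2 = a := hp2
          exact hh ▸ hhor p1 hp1
        have hcl : (r, a) ∈ closure ({x : X | x ≠ r} ×ˢ ({a} : Set Y)) := by
          rw [closure_prod_eq]
          exact ⟨hR, subset_closure rfl⟩
        exact q.2.closure_subset (closure_mono hS hcl)
      · -- both r and a are isolated points
        have hoa : IsOpen ({a} : Set Y) := by
          rw [mem_closure_iff] at hA
          push_neg at hA
          obtain ⟨U, hU, haU, hUe⟩ := hA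
          have hU1 : U = ({a} : Set Y) := by
            apply Set.Subset.antisymm
            · intro y hy
              by_contra hya
              have : y ∈ U ∩ {y : Y | y ≠ a} := ⟨hy, hya⟩
              rw [hUe] at this
              exact this
            · exact Set.singleton_subset_iff.mpr haU
          exact hU1 ▸ hU
        have hor : IsOpen ({r} : Set X) := by
          rw [mem_closure_iff] at hR
          push_neg at hR
          obtain ⟨U, hU, hrU, hUe⟩ := hR
          have hU1 : U = ({r} : Set X) := by
            apply Set.Subset.antisymm
            · intro x hx
              by_contra hxr
              have : x ∈ U ∩ {x : X | x ≠ r} := ⟨hx, hxr⟩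
              rw [hUe] at this
              exact this
            · exact Set.singleton_subset_iff.mpr hrU
          exact hU1 ▸ hU
        have hcross_open : IsOpen (cross r a) :=
          (hor.prod isOpen_univ).union (isOpen_univ.prod hoa)
        have ho : IsOpen (cross r a ∩ ({(r, a)} : Set (X × Y))ᶜ) :=
          hcross_open.inter isClosed_singleton.isOpen_compl
        have hqo : q.val ⊆ cross r a ∩ ({(r, a)} : Set (X × Y))ᶜ := by
          intro p hp
          exact ⟨hsub hp, fun hpe => hra (Set.mem_singleton_iff.mp hpe ▸ hp)⟩
        obtain ⟨φ, hφ⟩ := exists_graph_subset q hq ho hqo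
        -- every x ≠ r maps to a
        have key : ∀ x : X, x ≠ r → φ x = a := by
          intro x hx
          obtain ⟨hc, hne⟩ := hφ x
          rcases hc with h | h
          · exact absurd (show x = r from h.1) hx
          · exact h.2
        -- two distinct points different from r
        obtain ⟨p, p', hpp', hpr, hp'r⟩ :
            ∃ p p' : X, p ≠ p' ∧ p ≠ r ∧ p' ≠ r := by
          by_cases h1 : x₁ = r
          · exact ⟨x₂, x₃, h23, fun h => h12 (h1.trans h.symm),
              fun h => h13 (h1.trans h.symm)⟩
          · by_cases h2 : x₂ = r
            · exact ⟨x₁, x₃, h13, h1, fun h => h23 (h2.trans h.symm)⟩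
            · exact ⟨x₁, x₂, h12, h1, h2⟩
        exact hpp' (φ.injective ((key p hpr).trans (key p' hp'r).symm))
  -- conclude
  apply Set.Subset.antisymm hsub
  rintro ⟨p1, p2⟩ hp
  rcases hp with ⟨hp1, -⟩ | ⟨-, hp2⟩
  · have hh : p1 = r := hp1
    subst hh
    by_cases h : p2 = a
    · exact h ▸ hra
    · exact hver p2 h
  · have hh : p2 = a := hp2
    subst hh
    by_cases h : p1 = r
    · exact h ▸ hra
    · exact hhor p1 h
end

section
/- Let X be a compact Hausdorff space and Z = Closed(X), the space of nonempty closed subsets with the Vietoris topology. Let S be a Vietoris-closed subset of Z and C ⊆ min(S) be a Vietoris-closed subset consisting of minimal elements of S (with respect to inclusion). Then every Vietoris-neighborhood of C in S contains a lower-Vietoris ('OG') neighborhood of C in S, i.e., the neighborhood filters of C in S for the Vietoris topology and for the lower Vietoris topology coincide. -/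
/-- The lower Vietoris ("OG") topology on the hyperspace of closed subsets. -/
def lowerVietoris (Z : Type*) [TopologicalSpace Z] :
    TopologicalSpace {s : Set Z // IsClosed s} :=
  TopologicalSpace.generateFrom
    {A | ∃ o : Set Z, IsOpen o ∧ A = {c : {s : Set Z // IsClosed s} | c.val ⊆ o}}

/-- The Vietoris topology on the hyperspace of closed subsets. -/
def vietoris (Z : Type*) [TopologicalSpace Z] :
    TopologicalSpace {s : Set Z // IsClosed s} :=
  TopologicalSpace.generateFrom
    ({A | ∃ o : Set Z, IsOpen o ∧ A = {c : {s : Set Z // IsClosed s} | c.val ⊆ o}} ∪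
     {A | ∃ o : Set Z, IsOpen o ∧ A = {c : {s : Set Z // IsClosed s} | (c.val ∩ o).Nonempty}})

open Set TopologicalSpace

/-- The "hit" (upper) topology on the hyperspace. -/
def hitTop (Z : Type*) [TopologicalSpace Z] :
    TopologicalSpace {s : Set Z // IsClosed s} :=
  TopologicalSpace.generateFrom
    {A | ∃ o : Set Z, IsOpen o ∧ A = {c : {s : Set Z // IsClosed s} | (c.val ∩ o).Nonempty}}

theorem vietoris_le_lower (Z : Type*) [TopologicalSpace Z] :
    vietoris Z ≤ lowerVietoris Z :=
  TopologicalSpace.generateFrom_anti Set.subset_union_left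

theorem vietoris_le_hit (Z : Type*) [TopologicalSpace Z] :
    vietoris Z ≤ hitTop Z :=
  TopologicalSpace.generateFrom_anti Set.subset_union_right

theorem alexander_subbase {α : Type*} (g : Set (Set α))
    (h : ∀ c ⊆ g, ⋃₀ c = univ → ∃ c' ⊆ c, c'.Finite ∧ ⋃₀ c' = univ) :
    @CompactSpace α (TopologicalSpace.generateFrom g) := by
  letI : TopologicalSpace α := TopologicalSpace.generateFrom g
  constructor
  rw [isCompact_iff_ultrafilter_le_nhds]
  intro f _
  by_contra hcon
  push_neg at hcon
  have key : ∀ a : α, ∃ s ∈ g, a ∈ s ∧ s ∉ f := by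
    intro a
    by_contra hc
    push_neg at hc
    refine hcon a (mem_univ a) ?_
    rw [TopologicalSpace.nhds_generateFrom]
    refine le_iInf fun s => le_iInf fun hs => Filter.le_principal_iff.2 ?_
    exact hc s hs.2 hs.1
  choose t htg hat hft using key
  obtain ⟨c', hc'sub, hc'fin, hc'cov⟩ := h (Set.range t)
    (by rintro s ⟨a, rfl⟩; exact htg a)
    (Set.eq_univ_of_forall fun a => ⟨t a, Set.mem_range_self a, hat a⟩)
  have hmem : (⋂ s ∈ c', sᶜ) ∈ f := by
    refine (Filter.biInter_mem hc'fin).2 fun s hs => ?_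
    obtain ⟨a, rfl⟩ := hc'sub hs
    exact Ultrafilter.compl_mem_iff_notMem.2 (hft a)
  have : (⋂ s ∈ c', sᶜ) = (∅ : Set α) := by
    rw [← compl_univ, ← hc'cov, Set.compl_sUnion]
    ext x; simp [Set.mem_sInter]
  rw [this] at hmem
  exact Filter.empty_notMem (f : Filter α) hmem

theorem vietoris_compact (X : Type*) [TopologicalSpace X] [CompactSpace X] :
    @CompactSpace {s : Set X // IsClosed s} (vietoris X) := by
  apply alexander_subbase
  intro c hc hcov
  set b : Set (Set X) :=
    {o | IsOpen o ∧ {cl : {s : Set X // IsClosed s} | (cl.val ∩ o).Nonempty} ∈ c} with hb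
  have hw : IsOpen (⋃₀ b) := isOpen_sUnion fun o ho => ho.1
  have hfZ : IsClosed (⋃₀ b)ᶜ := hw.isClosed_compl
  have hmem : (⟨(⋃₀ b)ᶜ, hfZ⟩ : {s : Set X // IsClosed s}) ∈ ⋃₀ c := hcov ▸ mem_univ _
  obtain ⟨A, hAc, hA⟩ := hmem
  rcases hc hAc with hA1 | hA2
  · obtain ⟨o₀, ho₀, rfl⟩ := hA1
    have hfo : (⋃₀ b)ᶜ ⊆ o₀ := hA
    have hcpt : IsCompact o₀ᶜ := ho₀.isClosed_compl.isCompact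
    have hsub : o₀ᶜ ⊆ ⋃ o ∈ b, o := by
      intro x hx
      have hx' : x ∈ ⋃₀ b := by by_contra hx'; exact hx (hfo hx')
      simpa [Set.sUnion_eq_biUnion] using hx'
    obtain ⟨b', hb'sub, hb'fin, hb'cov⟩ :=
      hcpt.elim_finite_subcover_image (fun o (ho : o ∈ b) => ho.1) hsub
    refine ⟨insert {cl : {s : Set X // IsClosed s} | cl.val ⊆ o₀}
      ((fun o => {cl : {s : Set X // IsClosed s} | (cl.val ∩ o).Nonempty}) '' b'), ?_, ?_, ?_⟩
    · rintro A (rfl | ⟨o, ho, rfl⟩)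
      · exact hAc
      · exact (hb'sub ho).2
    · exact (hb'fin.image _).insert _
    · apply eq_univ_of_forall
      intro s
      by_cases hs : ∃ o ∈ b', (s.val ∩ o).Nonempty
      · obtain ⟨o, ho, hne⟩ := hs
        exact ⟨_, mem_insert_of_mem _ ⟨o, ho, rfl⟩, hne⟩
      · push_neg at hs
        refine ⟨_, mem_insert _ _, ?_⟩
        intro x hx
        by_contra hxo
        obtain ⟨o, ho, hxo'⟩ := mem_iUnion₂.1 (hb'cov hxo)
        exact Set.eq_empty_iff_forall_notMem.1 (hs o ho) x ⟨hx, hxo'⟩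
  · obtain ⟨o, ho, rfl⟩ := hA2
    obtain ⟨x, hx1, hx2⟩ := hA
    exact absurd ⟨o, ⟨ho, hAc⟩, hx2⟩ hx1

theorem rel_closed (X : Type*) [TopologicalSpace X] [CompactSpace X] [T2Space X] :
    @IsClosed ({s : Set X // IsClosed s} × {s : Set X // IsClosed s})
      (@instTopologicalSpaceProd _ _ (lowerVietoris X) (hitTop X))
      {pq | pq.2.val ⊆ pq.1.val} := by
  letI : TopologicalSpace ({s : Set X // IsClosed s} × {s : Set X // IsClosed s}) :=
    @instTopologicalSpaceProd _ _ (lowerVietoris X) (hitTop X)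
  rw [← isOpen_compl_iff]
  have heq : {pq : {s : Set X // IsClosed s} × {s : Set X // IsClosed s} |
        pq.2.val ⊆ pq.1.val}ᶜ =
      ⋃ (uv : Set X × Set X) (_ : IsOpen uv.1 ∧ IsOpen uv.2 ∧ Disjoint uv.1 uv.2),
        {c : {s : Set X // IsClosed s} | c.val ⊆ uv.2} ×ˢ
          {c : {s : Set X // IsClosed s} | (c.val ∩ uv.1).Nonempty} := by
    ext ⟨p, q⟩
    simp only [mem_compl_iff, mem_setOf_eq, mem_iUnion, Set.mem_prod]
    constructor
    · intro hnsub
      obtain ⟨x, hxq, hxp⟩ := not_subset.1 hnsub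
      obtain ⟨u, v, hu, hv, hxu, hpv, huv⟩ :=
        normal_separation isClosed_singleton p.2
          (Set.disjoint_singleton_left.2 hxp)
      exact ⟨(u, v), ⟨hu, hv, huv⟩, hpv, ⟨x, hxq, hxu rfl⟩⟩
    · rintro ⟨⟨u, v⟩, ⟨hu, hv, huv⟩, hpsub, hqhit⟩ hqp
      obtain ⟨x, hxq, hxu⟩ := hqhit
      exact huv.ne_of_mem hxu (hpsub (hqp hxq)) rfl
  rw [heq]
  exact isOpen_iUnion fun uv => isOpen_iUnion fun h =>
    @IsOpen.prod _ _ (lowerVietoris X) (hitTop X) _ _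
      (isOpen_generateFrom_of_mem ⟨uv.2, h.2.1, rfl⟩)
      (isOpen_generateFrom_of_mem ⟨uv.1, h.1, rfl⟩)

theorem up_closed (X : Type*) [TopologicalSpace X] [CompactSpace X] [T2Space X]
    {K : Set {s : Set X // IsClosed s}} (hK : @IsCompact _ (hitTop X) K) :
    @IsClosed _ (lowerVietoris X) {p : {s : Set X // IsClosed s} | ∃ q ∈ K, q.val ⊆ p.val} := by
  letI tL : TopologicalSpace {s : Set X // IsClosed s} := lowerVietoris X
  rw [← isOpen_compl_iff]
  rw [isOpen_iff_forall_mem_open]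
  intro p hp
  simp only [mem_compl_iff, mem_setOf_eq, not_exists, not_and] at hp
  -- {p} × K ⊆ complement of the relation
  obtain ⟨u, v, hu, hv, hpu, hKv, huv⟩ :=
    @generalized_tube_lemma _ _ tL (hitTop X) {p} (isCompact_singleton) K hK
      _ ((rel_closed X).isOpen_compl)
      (by
        rintro ⟨p', q⟩ ⟨rfl, hq⟩
        exact fun hsub => hp q hq hsub)
  refine ⟨u, ?_, hu, hpu rfl⟩
  intro p' hp'
  simp only [mem_compl_iff, mem_setOf_eq, not_exists, not_and]
  intro q hq hsub
  exact huv (Set.mk_mem_prod hp' (hKv hq)) hsub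

/-- Let `X` be a compactum, `S` a Vietoris-closed set of closed subsets of `X`, and `C ⊆ S` a
Vietoris-closed set consisting of minimal elements of `S`. Then the neighborhood filter of `C`
in the subspace `S` for the Vietoris topology coincides with that for the lower Vietoris
topology. -/
theorem vietoris_nhds_of_minimal_eq_lower {X : Type*} [TopologicalSpace X] [CompactSpace X]
    [T2Space X]
    (S C : Set {s : Set X // IsClosed s})
    (hS : @IsClosed _ (vietoris X) S) (hC : @IsClosed _ (vietoris X) C) (hCS : C ⊆ S)
    (hmin : ∀ c ∈ C, ∀ s ∈ S, s.val ⊆ c.val → s = c) :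
    @nhdsSet {x // x ∈ S}
        (TopologicalSpace.induced (Subtype.val : {x // x ∈ S} → _) (vietoris X))
        (Subtype.val ⁻¹' C) =
      @nhdsSet {x // x ∈ S}
        (TopologicalSpace.induced (Subtype.val : {x // x ∈ S} → _) (lowerVietoris X))
        (Subtype.val ⁻¹' C) := by
  set tV := TopologicalSpace.induced (Subtype.val : {x // x ∈ S} → _) (vietoris X) with htV
  set tL := TopologicalSpace.induced (Subtype.val : {x // x ∈ S} → _) (lowerVietoris X) with htL
  apply Filter.ext
  intro T
  rw [@mem_nhdsSet_iff_exists _ tV, @mem_nhdsSet_iff_exists _ tL]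
  constructor
  · rintro ⟨U, hUopen, hCU, hUT⟩
    obtain ⟨W, hWopen, hWU⟩ := (@isOpen_induced_iff _ _ (vietoris X) U Subtype.val).1 hUopen
    have hCW : C ⊆ W := by
      intro c hc
      have : (⟨c, hCS hc⟩ : {x // x ∈ S}) ∈ U := hCU hc
      rw [← hWU] at this
      exact this
    -- K = S \ W is Vietoris-closed, hence Vietoris-compact, hence hit-compact
    have hKclosed : @IsClosed _ (vietoris X) (S ∩ Wᶜ) :=
      @IsClosed.inter _ _ _ (vietoris X) hS (@IsOpen.isClosed_compl _ (vietoris X) _ hWopen)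
    have hKcomp : @IsCompact _ (vietoris X) (S ∩ Wᶜ) :=
      @IsClosed.isCompact _ (vietoris X) _ (vietoris_compact X) hKclosed
    have hKhit : @IsCompact _ (hitTop X) (S ∩ Wᶜ) := by
      have := @IsCompact.image _ _ (vietoris X) (hitTop X) _ id hKcomp
        (continuous_id_of_le (vietoris_le_hit X))
      simpa using this
    have hD := up_closed X hKhit
    have hCD : ∀ c ∈ C, c ∉ {p : {s : Set X // IsClosed s} | ∃ q ∈ S ∩ Wᶜ, q.val ⊆ p.val} := by
      rintro c hc ⟨q, ⟨hqS, hqW⟩, hsub⟩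
      exact hqW (hmin c hc q hqS hsub ▸ hCW hc)
    refine ⟨Subtype.val ⁻¹' {p | ∃ q ∈ S ∩ Wᶜ, q.val ⊆ p.val}ᶜ, ?_, ?_, ?_⟩
    · have hDopen : @IsOpen _ (lowerVietoris X) {p : {s : Set X // IsClosed s} |
          ∃ q ∈ S ∩ Wᶜ, q.val ⊆ p.val}ᶜ := (@isOpen_compl_iff _ _ (lowerVietoris X)).2 hD
      exact (@isOpen_induced_iff _ _ (lowerVietoris X) _ Subtype.val).2 ⟨_, hDopen, rfl⟩
    · intro x hx
      exact hCD x.val hx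
    · intro x hx
      apply hUT
      rw [← hWU]
      by_contra hxW
      exact hx ⟨x.val, ⟨x.2, hxW⟩, subset_rfl⟩
  · rintro ⟨U, hUopen, hCU, hUT⟩
    exact ⟨U, hUopen.mono (induced_mono (vietoris_le_lower X)), hCU, hUT⟩
end
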